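/- arXiv:2003.03298 — 5 statements merged into one kernel-verified Lean document; each statement's English description precedes it below -/
import Mathlib

section
/- Let K be an imaginary quadratic field with ring of integers O_K. If {a₁, a₂, a₃, a₄} is a Diophantine quadruple with D(-1) in O_K, then aᵢaⱼ is not a square in O_K for any i ≠ j. -/
/-!
Work inside `ℂ`, in the ring `R` of integers of `K`. The only arithmetic input is that
`z * conj z` is a natural number for `z ∈ R`; then `z + conj z` is an integer, with
`(z + conj z)² ≤ 4 z conj z`.

If `aᵢ aⱼ = x²` and `aᵢ aⱼ - 1 = y²`, then `(x + y)(x - y) = 1` makes `x + y` a unit with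
inverse `conj (x + y)`, so `2x ∈ ℤ` and `aᵢ aⱼ = 1`. Hence `b = aᵢ` is a unit, `aⱼ = conj b`,
and `t = b + conj b ∈ {-1, 0, 1}` because `aᵢ ≠ aⱼ`. For another member `d` of the quadruple,
with `b d - 1 = p²` and `conj b d - 1 = q²`, we get `(p - b q)(p + b q) = b² - 1`, of norm
`4 - t²`. The possible splittings of this norm force `d ∈ {0, t, b, conj b}`, so the two
remaining members of the quadruple would both equal `t`.
-/

open Complex ComplexConjugate

theorem sq_le_four_mul_of_add_conj {z : ℂ} {m : ℤ} {n : ℕ} (hm : z + conj z = m)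
    (hn : z * conj z = n) : m ^ 2 ≤ 4 * n := by
  have hre : (m : ℝ) = 2 * z.re := by simpa [two_mul] using (congrArg re hm).symm
  have hns : (n : ℝ) = z.re * z.re + z.im * z.im := by
    rw [mul_conj, normSq_apply] at hn
    exact_mod_cast hn.symm
  have : (m : ℝ) ^ 2 ≤ 4 * n := by
    rw [hre, hns]
    nlinarith [sq_nonneg z.im]
  exact_mod_cast this

theorem sub_mul_mul_add_mul_eq {b c d p q : ℂ} (hbc : b * c = 1) (hpd : b * d - 1 = p ^ 2)
    (hqd : c * d - 1 = q ^ 2) : (p - b * q) * (p + b * q) = b ^ 2 - 1 := by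
  linear_combination -hpd + b ^ 2 * hqd - b * d * hbc

theorem exists_unit_of_mul_eq {R : Subring ℂ} {α β w : ℂ} (hα : α ∈ R) (hβ : β ∈ R)
    (h : α * β = w) (hunit : α * conj α = 1 ∨ β * conj β = 1) :
    ∃ ε ∈ R, ε * conj ε = 1 ∧ α + β = ε + w * conj ε := by
  rcases hunit with hu | hu
  · exact ⟨α, hα, hu, by linear_combination (-β) * hu + conj α * h⟩
  · exact ⟨β, hβ, hu, by linear_combination (-α) * hu + conj β * h⟩

theorem eq_zero_or_eq_of_pow_four_eq {b c d p t ε ε' : ℂ} (hbc : b * c = 1) (ht : b + c = t)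
    (ht1 : t ^ 2 = 1) (hε : ε * ε' = 1) (hε4 : ε ^ 4 = b ^ 2) (hpd : b * d - 1 = p ^ 2)
    (h2p : 2 * p = ε + (b ^ 2 - 1) * ε') : d = 0 ∨ d = t := by
  have hk : (b ^ 2 - 1) ^ 2 * c ^ 2 = -3 := by
    linear_combination (b * ((b ^ 2 - 1) * c + b - c) - 4) * hbc + (b + c + t) * ht + ht1
  have hε' : ε' ^ 2 = ε ^ 2 * c ^ 2 := by
    linear_combination (-(ε' ^ 2) * (b * c + 1)) * hbc - ε' ^ 2 * c ^ 2 * hε4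
      + c ^ 2 * ε ^ 2 * (ε * ε' + 1) * hε
  have hp2 : 4 * p ^ 2 = 2 * b ^ 2 - 2 - 2 * ε ^ 2 := by
    linear_combination (2 * p + ε + (b ^ 2 - 1) * ε') * h2p + 2 * (b ^ 2 - 1) * hε
      + (b ^ 2 - 1) ^ 2 * hε' + ε ^ 2 * hk
  have h2d : 2 * d - t = -(ε ^ 2 * c) := by
    linear_combination 2 * c * hpd + c * hp2 / 2 - (2 * d - b) * hbc + ht
  have hdd : d * (d - t) = 0 := by
    linear_combination (2 * d - t - ε ^ 2 * c) * h2d / 4 + c ^ 2 * hε4 / 4 - ht1 / 4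
      + (b * c + 1) * hbc / 4
  simpa [sub_eq_zero] using hdd

def NatNormSq (R : Subring ℂ) : Prop := ∀ z ∈ R, ∃ n : ℕ, normSq z = n

namespace NatNormSq

variable {R : Subring ℂ}

theorem exists_mul_conj (hR : NatNormSq R) {z : ℂ} (hz : z ∈ R) :
    ∃ n : ℕ, z * conj z = n := by
  obtain ⟨n, hn⟩ := hR z hz
  exact ⟨n, by rw [mul_conj, hn, ofReal_natCast]⟩

theorem exists_add_conj (hR : NatNormSq R) {z : ℂ} (hz : z ∈ R) :
    ∃ m : ℤ, z + conj z = m := by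
  obtain ⟨n, hn⟩ := hR.exists_mul_conj hz
  obtain ⟨n₁, hn₁⟩ := hR.exists_mul_conj (R.add_mem hz R.one_mem)
  rw [map_add, map_one] at hn₁
  exact ⟨n₁ - n - 1, by push_cast; linear_combination hn₁ - hn⟩

theorem exists_mul_conj_of_mul_eq (hR : NatNormSq R) {α β w : ℂ} (hα : α ∈ R) (hβ : β ∈ R)
    (h : α * β = w) {k : ℕ} (hw : w * conj w = k) :
    ∃ a b : ℕ, a * b = k ∧ α * conj α = a ∧ β * conj β = b := by
  obtain ⟨a, ha⟩ := hR.exists_mul_conj hα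
  obtain ⟨b, hb⟩ := hR.exists_mul_conj hβ
  refine ⟨a, b, ?_, ha, hb⟩
  have hconj := congrArg conj h
  rw [map_mul] at hconj
  exact_mod_cast show (a * b : ℂ) = k by
    linear_combination hw - a * hb - (β * conj β) * ha + (α * β) * hconj + conj w * h

theorem conj_eq_of_mul_eq_one (hR : NatNormSq R) {u v : ℂ} (hu : u ∈ R) (hv : v ∈ R)
    (huv : u * v = 1) : conj u = v := by
  obtain ⟨a, b, hab, ha, -⟩ := hR.exists_mul_conj_of_mul_eq hu hv huv (k := 1) (by simp)
  rw [Nat.eq_one_of_mul_eq_one_right hab, Nat.cast_one] at ha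
  linear_combination (-conj u) * huv + v * ha

theorem sq_eq_one_of_sub_one_eq_sq (hR : NatNormSq R) {x y : ℂ} (hx : x ∈ R) (hy : y ∈ R)
    (hx0 : x ≠ 0) (h : x ^ 2 - 1 = y ^ 2) : x ^ 2 = 1 := by
  have hconj : conj (x + y) = x - y :=
    hR.conj_eq_of_mul_eq_one (R.add_mem hx hy) (R.sub_mem hx hy) (by linear_combination h)
  obtain ⟨m, hm⟩ := hR.exists_add_conj (R.add_mem hx hy)
  have h2x : 2 * x = m := by linear_combination hm - hconj
  have hm4 : m ^ 2 ≤ 4 * 1 :=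
    sq_le_four_mul_of_add_conj hm (by rw [hconj]; linear_combination h)
  obtain ⟨k, hk⟩ := hR.exists_mul_conj hx
  have h2x' : 2 * conj x = m := by simpa [map_ofNat] using congrArg conj h2x
  have hkm : 4 * (k : ℤ) = m ^ 2 := by
    exact_mod_cast show 4 * (k : ℂ) = m ^ 2 by
      linear_combination -4 * hk + m * h2x + 2 * x * h2x'
  have hk0 : k ≠ 0 := by
    rintro rfl
    exact hx0 (by simpa using hk)
  have hm2 : (m : ℂ) ^ 2 = 4 := by exact_mod_cast (show m ^ 2 = 4 by omega)
  linear_combination (1 / 4 : ℂ) * hm2 + (1 / 4 : ℂ) * (2 * x + m) * h2x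

theorem two_mul_ne_sub_two_mul_conj (hR : NatNormSq R) {p ε : ℂ} (hp : p ∈ R) (hεR : ε ∈ R)
    (hε : ε * conj ε = 1) : 2 * p ≠ ε - 2 * conj ε := by
  intro h2p
  have h2p' : 2 * conj p = conj ε - 2 * ε := by simpa [map_ofNat] using congrArg conj h2p
  obtain ⟨n, hn⟩ := hR.exists_mul_conj hp
  obtain ⟨m, hm⟩ := hR.exists_add_conj (R.pow_mem hεR 2)
  rw [map_pow] at hm
  have : 4 * (n : ℤ) = 5 - 2 * m := by
    exact_mod_cast show 4 * (n : ℂ) = 5 - 2 * m by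
      linear_combination -4 * hn + 2 * conj p * h2p + (ε - 2 * conj ε) * h2p' + 5 * hε - 2 * hm
  omega

theorem eq_zero_or_eq_or_eq_of_conj_eq_neg (hR : NatNormSq R) {b c d p q : ℂ} (hp : p ∈ R)
    (hq : q ∈ R) (hpc : conj p = -p) (hqc : conj q = -q) (hbc : b * c = 1) (ht : b + c = 0)
    (hpd : b * d - 1 = p ^ 2) (hqd : c * d - 1 = q ^ 2) : d = 0 ∨ d = b ∨ d = c := by
  obtain ⟨np, hnp⟩ := hR.exists_mul_conj hp
  obtain ⟨nq, hnq⟩ := hR.exists_mul_conj hq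
  rw [hpc] at hnp
  rw [hqc] at hnq
  have hsum : np + nq = 2 := by
    exact_mod_cast show (np + nq : ℂ) = 2 by
      linear_combination -hnp - hnq + hpd + hqd - d * ht
  have hnp2 : np ≤ 2 := by omega
  interval_cases np
  · right; right
    linear_combination c * hpd - c * hnp - d * hbc
  · left
    linear_combination c * hpd - c * hnp - d * hbc
  · obtain rfl : nq = 0 := by omega
    right; left
    linear_combination b * hqd - b * hnq - d * hbc

theorem eq_zero_or_eq_or_eq_of_add_eq_zero (hR : NatNormSq R) {b c d p q : ℂ} (hb : b ∈ R)
    (hc : conj b = c) (hbc : b * c = 1) (ht : b + c = 0) (hp : p ∈ R) (hq : q ∈ R)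
    (hpd : b * d - 1 = p ^ 2) (hqd : c * d - 1 = q ^ 2) : d = 0 ∨ d = b ∨ d = c := by
  have hb2 : b ^ 2 = -1 := by linear_combination b * ht - hbc
  have hαR := R.sub_mem hp (R.mul_mem hb hq)
  have hβR := R.add_mem hp (R.mul_mem hb hq)
  have hαβ : (p - b * q) * (p + b * q) = -2 := by
    linear_combination sub_mul_mul_add_mul_eq hbc hpd hqd + hb2
  obtain ⟨nα, nβ, hn, hα, hβ⟩ :=
    hR.exists_mul_conj_of_mul_eq hαR hβR hαβ (k := 4) (by rw [map_neg, map_ofNat]; norm_num)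
  have hnα : nα ≤ 4 := Nat.le_of_dvd (by norm_num) (Dvd.intro _ hn)
  have hcases : (nα = 1 ∨ nβ = 1) ∨ nα = 2 := by interval_cases nα <;> omega
  rcases hcases with hunit | h2
  · obtain ⟨ε, hεR, hε, hsum⟩ := exists_unit_of_mul_eq hαR hβR hαβ
      (hunit.imp (fun h1 => by rw [hα, h1, Nat.cast_one]) (fun h1 => by rw [hβ, h1, Nat.cast_one]))
    exact (hR.two_mul_ne_sub_two_mul_conj hp hεR hε (by linear_combination hsum)).elim
  rw [h2, Nat.cast_ofNat] at hα
  have hα0 : p - b * q ≠ 0 := by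
    rintro h0
    norm_num [h0] at hα
  -- `p + b q = -conj (p - b q)`, as both equal `-2 / (p - b q)`
  have E1 : p + b * q + (conj p - c * conj q) = 0 := by
    refine mul_left_cancel₀ hα0 ?_
    simp only [map_sub, map_mul, hc] at hα
    linear_combination hαβ + hα
  have E2 : conj p + c * conj q + (p - b * q) = 0 := by
    simpa [← hc] using congrArg conj E1
  exact hR.eq_zero_or_eq_or_eq_of_conj_eq_neg hp hq (by linear_combination (E1 + E2) / 2)
    (by linear_combination -b * (E1 - E2) / 2 + q * hb2 - conj q * hbc) hbc ht hpd hqd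

theorem pow_four_eq_sq_of_two_mul_eq (hR : NatNormSq R) {b c p ε : ℂ} (hcR : c ∈ R)
    (hc : conj b = c) (hbc : b * c = 1) (h3 : (b ^ 2 - 1) * (c ^ 2 - 1) = 3) (hp : p ∈ R)
    (hεR : ε ∈ R) (hε : ε * conj ε = 1) (h2p : 2 * p = ε + (b ^ 2 - 1) * conj ε) :
    ε ^ 4 = b ^ 2 := by
  have h2p' : 2 * conj p = conj ε + (c ^ 2 - 1) * ε := by
    simpa [map_ofNat, hc] using congrArg conj h2p
  have hγR : ε ^ 2 * (c ^ 2 - 1) ∈ R :=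
    R.mul_mem (R.pow_mem hεR 2) (R.sub_mem (R.pow_mem hcR 2) R.one_mem)
  have hγc : conj (ε ^ 2 * (c ^ 2 - 1)) = conj ε ^ 2 * (b ^ 2 - 1) := by simp [← hc]
  obtain ⟨m, hm⟩ := hR.exists_add_conj hγR
  have hm12 : m ^ 2 ≤ 4 * 3 := sq_le_four_mul_of_add_conj hm (by
    rw [hγc]
    push_cast
    linear_combination (ε ^ 2 * conj ε ^ 2) * h3 + 3 * (ε * conj ε + 1) * hε)
  rw [hγc] at hm
  obtain ⟨n, hn⟩ := hR.exists_mul_conj hp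
  have h4n : 4 * (n : ℤ) = 4 + m := by
    exact_mod_cast show 4 * (n : ℂ) = 4 + m by
      linear_combination -4 * hn + 2 * conj p * h2p + (ε + (b ^ 2 - 1) * conj ε) * h2p'
        + 4 * hε + ε * conj ε * h3 + hm
  -- `4 N(p) = 4 + m` and `m² ≤ 12` force `m = 0`: `ε² (c² - 1)` is purely imaginary
  obtain rfl : m = 0 := by
    have : m < 4 := by nlinarith
    have : -4 < m := by nlinarith
    omega
  have hb21 : b ^ 2 - 1 ≠ 0 := fun h => by norm_num [h] at h3
  refine mul_left_cancel₀ hb21 ?_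
  linear_combination -(ε ^ 2 * b ^ 2) * hm + (b ^ 4 - b ^ 2) * (ε * conj ε + 1) * hε
    + ε ^ 4 * (b * c + 1) * hbc

theorem eq_zero_or_eq_of_add_eq_of_sq_eq_one (hR : NatNormSq R) {b c d p q : ℂ} {t : ℤ}
    (hb : b ∈ R) (hc : conj b = c) (hbc : b * c = 1) (ht : b + c = t) (ht1 : t ^ 2 = 1)
    (hp : p ∈ R) (hq : q ∈ R) (hpd : b * d - 1 = p ^ 2) (hqd : c * d - 1 = q ^ 2) :
    d = 0 ∨ d = t := by
  have ht1' : (t : ℂ) ^ 2 = 1 := by exact_mod_cast ht1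
  have hcR : c ∈ R := by
    rw [show c = t - b by linear_combination ht]
    exact R.sub_mem (intCast_mem R t) hb
  have h3 : (b ^ 2 - 1) * (c ^ 2 - 1) = 3 := by
    linear_combination (b * c + 3) * hbc - (b + c + t) * ht - ht1'
  have hαR := R.sub_mem hp (R.mul_mem hb hq)
  have hβR := R.add_mem hp (R.mul_mem hb hq)
  have hαβ := sub_mul_mul_add_mul_eq hbc hpd hqd
  obtain ⟨nα, nβ, hn, hα, hβ⟩ := hR.exists_mul_conj_of_mul_eq hαR hβR hαβ (k := 3)
    (by simpa only [map_sub, map_pow, map_one, hc, Nat.cast_ofNat] using h3)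
  have hunit : nα = 1 ∨ nβ = 1 :=
    (Nat.prime_three.eq_one_or_self_of_dvd nα ⟨nβ, hn.symm⟩).imp_right fun h => by subst h; omega
  obtain ⟨ε, hεR, hε, hsum⟩ := exists_unit_of_mul_eq hαR hβR hαβ
    (hunit.imp (fun h1 => by rw [hα, h1, Nat.cast_one]) (fun h1 => by rw [hβ, h1, Nat.cast_one]))
  have h2p : 2 * p = ε + (b ^ 2 - 1) * conj ε := by linear_combination hsum
  exact eq_zero_or_eq_of_pow_four_eq hbc ht ht1' hε
    (hR.pow_four_eq_sq_of_two_mul_eq hcR hc hbc h3 hp hεR hε h2p) hpd h2p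

theorem eq_zero_or_eq_add_or_eq_or_eq (hR : NatNormSq R) {b c d p q : ℂ} (hb : b ∈ R)
    (hc : conj b = c) (hbc : b * c = 1) (hne : b ≠ c) (hp : p ∈ R) (hq : q ∈ R)
    (hpd : b * d - 1 = p ^ 2) (hqd : c * d - 1 = q ^ 2) :
    d = 0 ∨ d = b + c ∨ d = b ∨ d = c := by
  obtain ⟨t, ht⟩ := hR.exists_add_conj hb
  have ht4 : t ^ 2 ≤ 4 * 1 := sq_le_four_mul_of_add_conj ht (by rw [hc, hbc, Nat.cast_one])
  rw [hc] at ht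
  have ht2 : t ^ 2 ≠ 4 := fun h => by
    have h' : (t : ℂ) ^ 2 = 4 := by exact_mod_cast h
    refine hne (sub_eq_zero.mp (pow_eq_zero_iff two_ne_zero |>.mp ?_))
    linear_combination (b + c + t) * ht - 4 * hbc + h'
  have hcases : t = 0 ∨ t ^ 2 = 1 := by
    have : -2 ≤ t := by nlinarith
    have : t ≤ 2 := by nlinarith
    interval_cases t <;> simp_all
  rcases hcases with rfl | ht1
  · rcases hR.eq_zero_or_eq_or_eq_of_add_eq_zero hb hc hbc (by simpa using ht) hp hq hpd hqd
      with h | h | h <;> simp [h]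
  · rcases hR.eq_zero_or_eq_of_add_eq_of_sq_eq_one hb hc hbc ht ht1 hp hq hpd hqd with h | h
    · exact .inl h
    · exact .inr (.inl (h.trans ht.symm))

theorem not_exists_mul_eq_sq (hR : NatNormSq R) {a : Fin 4 → ℂ} (hinj : Function.Injective a)
    (ha0 : ∀ i, a i ≠ 0) (haR : ∀ i, a i ∈ R)
    (hD : ∀ i j, i ≠ j → ∃ x ∈ R, a i * a j - 1 = x ^ 2) {i j : Fin 4} (hij : i ≠ j) :
    ¬∃ x ∈ R, a i * a j = x ^ 2 := by
  rintro ⟨x, hxR, hx⟩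
  obtain ⟨y, hyR, hy⟩ := hD i j hij
  have hx0 : x ≠ 0 := by
    rintro rfl
    simp [ha0] at hx
  have hone : a i * a j = 1 := hx.trans (hR.sq_eq_one_of_sub_one_eq_sq hxR hyR hx0 (hx ▸ hy))
  have hc := hR.conj_eq_of_mul_eq_one (haR i) (haR j) hone
  have hrest : ∀ k, k ≠ i → k ≠ j → a k = a i + a j := by
    intro k hki hkj
    obtain ⟨p, hpR, hp⟩ := hD i k hki.symm
    obtain ⟨q, hqR, hq⟩ := hD j k hkj.symm
    rcases hR.eq_zero_or_eq_add_or_eq_or_eq (haR i) hc hone (hinj.ne hij) hpR hqR hp hq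
      with h | h | h | h
    · exact absurd h (ha0 k)
    · exact h
    · exact absurd (hinj h) hki
    · exact absurd (hinj h) hkj
  obtain ⟨k, l, hkl, hki, hkj, hli, hlj⟩ := (by decide : ∀ i j : Fin 4, i ≠ j →
    ∃ k l : Fin 4, k ≠ l ∧ k ≠ i ∧ k ≠ j ∧ l ≠ i ∧ l ≠ j) i j hij
  exact hkl (hinj ((hrest k hki hkj).trans (hrest l hli hlj).symm))

end NatNormSq

namespace Subfield

variable {K : Subfield ℂ}

theorem exists_rat_add_rat_mul (hdeg : Module.finrank ℚ K = 2) {w : ℂ} (hwK : w ∈ K)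
    (hw : w.im ≠ 0) {z : ℂ} (hz : z ∈ K) : ∃ r s : ℚ, z = r + s * w := by
  have hli : LinearIndependent ℚ ![(1 : K), ⟨w, hwK⟩] := by
    refine LinearIndependent.pair_iff.mpr fun r s hrs => ?_
    have hC : (r : ℂ) + s * w = 0 := by simpa [Rat.smul_def] using congrArg Subtype.val hrs
    have hs : s = 0 := by simpa [hw] using congrArg im hC
    subst hs
    exact ⟨by simpa using hC, rfl⟩
  have hspan := hli.span_eq_top_of_card_eq_finrank (by simp [hdeg])
  obtain ⟨c, hc⟩ := (Submodule.mem_span_range_iff_exists_fun ℚ).mp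
    (hspan ▸ Submodule.mem_top : (⟨z, hz⟩ : K) ∈ Submodule.span ℚ _)
  refine ⟨c 0, c 1, ?_⟩
  simpa [Fin.sum_univ_two, Rat.smul_def] using (congrArg Subtype.val hc).symm

theorem conj_mem (hdeg : Module.finrank ℚ K = 2) {w : ℂ} (hwK : w ∈ K) (hw : w.im ≠ 0)
    {z : ℂ} (hz : z ∈ K) : conj z ∈ K := by
  obtain ⟨p, q, hpq⟩ := exists_rat_add_rat_mul hdeg hwK hw (K.mul_mem hwK hwK)
  -- `w` and `conj w` are the two roots of `X² - q X - p`
  have hconj : conj w = q - w := by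
    have hne : conj w - w ≠ 0 := sub_ne_zero.mpr fun h => hw (conj_eq_iff_im.mp h)
    have hpq' : conj w * conj w = p + q * conj w := by simpa using congrArg conj hpq
    refine eq_sub_of_add_eq (mul_left_cancel₀ hne ?_)
    linear_combination hpq' - hpq
  obtain ⟨r, s, rfl⟩ := exists_rat_add_rat_mul hdeg hwK hw hz
  rw [show conj ((r : ℂ) + s * w) = r + s * (q - w) by simp [hconj]]
  have hmem (r : ℚ) : (r : ℂ) ∈ K := SubfieldClass.ratCast_mem K r
  exact K.add_mem (hmem r) (K.mul_mem (hmem s) (K.sub_mem (hmem q) hwK))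

theorem exists_rat_eq_of_im_eq_zero (hdeg : Module.finrank ℚ K = 2) {w : ℂ} (hwK : w ∈ K)
    (hw : w.im ≠ 0) {z : ℂ} (hz : z ∈ K) (hzim : z.im = 0) : ∃ r : ℚ, z = r := by
  obtain ⟨r, s, rfl⟩ := exists_rat_add_rat_mul hdeg hwK hw hz
  have hs : s = 0 := by simpa [hw] using hzim
  exact ⟨r, by simp [hs]⟩

def integers (K : Subfield ℂ) : Subring ℂ :=
  K.toSubring ⊓ (integralClosure ℤ ℂ).toSubring

theorem mem_integers {z : ℂ} : z ∈ K.integers ↔ z ∈ K ∧ IsIntegral ℤ z := by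
  simp [integers, mem_integralClosure_iff]

theorem natNormSq_integers (hdeg : Module.finrank ℚ K = 2) {w : ℂ} (hwK : w ∈ K)
    (hw : w.im ≠ 0) : NatNormSq K.integers := by
  intro z hz
  obtain ⟨hzK, hzint⟩ := mem_integers.mp hz
  obtain ⟨r, hr⟩ := exists_rat_eq_of_im_eq_zero hdeg hwK hw
    (K.mul_mem hzK (conj_mem hdeg hwK hw hzK)) (by simp [mul_conj])
  have hrint : IsIntegral ℤ r := by
    rw [← isIntegral_algebraMap_iff (algebraMap ℚ ℂ).injective, eq_ratCast, ← hr]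
    exact hzint.mul (hzint.map (starRingEnd ℂ).toIntAlgHom)
  obtain ⟨m, rfl⟩ := IsIntegrallyClosed.isIntegral_iff.mp hrint
  have hm : (m : ℝ) = normSq z := by exact_mod_cast (mul_conj z ▸ hr).symm
  lift m to ℕ using by exact_mod_cast hm ▸ normSq_nonneg z
  exact ⟨m, by exact_mod_cast hm.symm⟩

end Subfield

/-- If {a₁, a₂, a₃, a₄} is a Diophantine quadruple with D(-1) in the ring of
integers of an imaginary quadratic field, then aᵢaⱼ is not a square in O_K for i ≠ j. -/
theorem stmt_2 (K : Subfield ℂ)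
    (hdeg : Module.finrank ℚ K = 2) (him : ∃ z : K, (z : ℂ).im ≠ 0)
    (a : Fin 4 → K)
    (hinj : Function.Injective a)
    (ha0 : ∀ i, a i ≠ 0)
    (haint : ∀ i, IsIntegral ℤ (a i))
    (hD : ∀ i j, i ≠ j → ∃ x : K, IsIntegral ℤ x ∧ a i * a j - 1 = x ^ 2) :
    ∀ i j, i ≠ j → ¬∃ x : K, IsIntegral ℤ x ∧ a i * a j = x ^ 2 := by
  obtain ⟨⟨w, hwK⟩, hw⟩ := him
  have hmem {z : K} (hz : IsIntegral ℤ z) : (z : ℂ) ∈ K.integers :=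
    Subfield.mem_integers.mpr ⟨z.2, hz.map K.subtype.toIntAlgHom⟩
  rintro i j hij ⟨x, hx, hxeq⟩
  refine (K.natNormSq_integers hdeg hwK hw).not_exists_mul_eq_sq (a := fun i => (a i : ℂ))
    (Subtype.val_injective.comp hinj) (fun i => by exact_mod_cast ha0 i) (fun i => hmem (haint i))
    (fun i j hij => ?_) hij ⟨x, hmem hx, by exact_mod_cast congrArg Subtype.val hxeq⟩
  obtain ⟨y, hy, hyeq⟩ := hD i j hij
  exact ⟨y, hmem hy, by exact_mod_cast congrArg Subtype.val hyeq⟩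
end

section
/- Let a, b, c ∈ O_K be nonzero with s² = ac - 1 for some s ∈ O_K, |c| > 4|a|, |a| ≥ 2, and let (x, z) ∈ O_K² with z ≠ 0 satisfy az² - cx² = c - a. Set θ = ±(s/a)√(a/c) with sign chosen so that |θ - sx/(az)| ≤ |−θ − sx/(az)|. Then |θ - sx/(az)| ≤ (|s|·|c - a|)/(|a|·√(|ac|)·|z|²) < (21|c|)/(16|a|·|z|²). -/
/-!
Put `u = sx/(az)`. Since `θ² = s²/(ac)`, the Pell-type equation gives the factorisation
`(θ - u)(-θ - u) = u² - θ² = -s²(c - a)/(a²cz²)`. The choice of sign makes `θ - u` the smaller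
factor, and then `|θ| ≤ |-θ - u|` by the triangle inequality applied to `2θ`. Dividing the norm of
the product by `|θ| = |s|/√|ac|` gives the first bound. The second one follows from
`|s|² ≤ |ac| + 1 ≤ (21/20)²|ac|` and `|c - a| < (5/4)|c|`, both consequences of `|c| > 4|a| ≥ 8`.
-/

lemma norm_le_norm_neg_sub_of_norm_sub_le {E : Type*} [SeminormedAddCommGroup E]
    [NormedSpace ℝ E] {θ u : E} (h : ‖θ - u‖ ≤ ‖-θ - u‖) : ‖θ‖ ≤ ‖-θ - u‖ := by
  have h2 : ‖(2 : ℝ) • θ‖ ≤ ‖θ - u‖ + ‖-θ - u‖ :=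
    calc ‖(2 : ℝ) • θ‖ = ‖(θ - u) - (-θ - u)‖ := by congr 1; module
      _ ≤ ‖θ - u‖ + ‖-θ - u‖ := norm_sub_le _ _
  rw [norm_smul, Real.norm_two] at h2
  linarith

lemma sub_mul_neg_sub_eq_of_pell {F : Type*} [Field F] {a c s x z θ : F}
    (ha : a ≠ 0) (hc : c ≠ 0) (hz : z ≠ 0) (hθ : θ ^ 2 = s ^ 2 / (a * c))
    (hpell : a * z ^ 2 - c * x ^ 2 = c - a) :
    (θ - s * x / (a * z)) * (-θ - s * x / (a * z)) =
      -(s ^ 2 * (c - a)) / (a ^ 2 * c * z ^ 2) := by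
  rw [show ∀ v : F, (θ - v) * (-θ - v) = v ^ 2 - θ ^ 2 from fun v => by ring, hθ]
  field_simp
  linear_combination (-s ^ 2) * hpell

lemma norm_eq_div_sqrt_of_sq_eq {F : Type*} [NormedDivisionRing F] {θ s t : F}
    (h : θ ^ 2 = s ^ 2 / t) : ‖θ‖ = ‖s‖ / √‖t‖ := by
  rw [← Real.sqrt_sq (norm_nonneg θ), ← norm_pow, h, norm_div, norm_pow,
    Real.sqrt_div (sq_nonneg _), Real.sqrt_sq (norm_nonneg s)]

lemma sq_norm_le_of_sq_eq_sub_one {F : Type*} [NormedDivisionRing F] {s t : F}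
    (h : s ^ 2 = t - 1) : ‖s‖ ^ 2 ≤ ‖t‖ + 1 := by
  rw [← norm_pow, h]
  simpa using norm_sub_le t 1

lemma sq_eq_of_eq_or_eq_neg_div_mul {F : Type*} [Field F] {a c s w θ : F} (ha : a ≠ 0)
    (hw : w ^ 2 = a / c) (hθ : θ = s / a * w ∨ θ = -(s / a * w)) :
    θ ^ 2 = s ^ 2 / (a * c) := by
  have hθ2 : θ ^ 2 = (s / a * w) ^ 2 := by rcases hθ with rfl | rfl <;> ring
  rw [hθ2, mul_pow, hw]
  field_simp

lemma sqrt_add_one_le {t : ℝ} (ht : 400 / 41 ≤ t) : √(t + 1) ≤ 21 / 20 * √t := by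
  rw [Real.sqrt_le_iff]
  refine ⟨by positivity, ?_⟩
  rw [mul_pow, Real.sq_sqrt (by linarith)]
  linarith

lemma pell_error_bound_lt {A C S D Z : ℝ} (hA : 2 ≤ A) (hC : 4 * A < C) (hS : S ^ 2 ≤ A * C + 1)
    (hD₀ : 0 ≤ D) (hD : D ≤ C + A) (hZ : 0 < Z) :
    S * D / (A * √(A * C) * Z ^ 2) < 21 * C / (16 * A * Z ^ 2) := by
  have hAC : 400 / 41 ≤ A * C := by nlinarith
  have hr : 0 < √(A * C) := Real.sqrt_pos.mpr (by linarith)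
  have hSr : S ≤ 21 / 20 * √(A * C) :=
    (le_abs_self S).trans ((Real.abs_le_sqrt hS).trans (sqrt_add_one_le hAC))
  have key : S * D < 21 / 16 * √(A * C) * C :=
    calc S * D ≤ 21 / 20 * √(A * C) * D := mul_le_mul_of_nonneg_right hSr hD₀
      _ < 21 / 20 * √(A * C) * (5 / 4 * C) := by gcongr; linarith
      _ = 21 / 16 * √(A * C) * C := by ring
  rw [div_lt_div_iff₀ (by positivity) (by positivity)]
  have hAZ : 0 < 16 * A * Z ^ 2 := by positivity
  nlinarith [mul_lt_mul_of_pos_right key hAZ]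

section Pell

variable {𝕜 : Type*} [NormedField 𝕜] [NormedSpace ℝ 𝕜] {a c s x z θ : 𝕜}

theorem norm_sub_le_of_pell (ha : a ≠ 0) (hc : c ≠ 0) (hs : s ≠ 0) (hz : z ≠ 0)
    (hθ : θ ^ 2 = s ^ 2 / (a * c)) (hpell : a * z ^ 2 - c * x ^ 2 = c - a)
    (hsign : ‖θ - s * x / (a * z)‖ ≤ ‖-θ - s * x / (a * z)‖) :
    ‖θ - s * x / (a * z)‖ ≤ ‖s‖ * ‖c - a‖ / (‖a‖ * √‖a * c‖ * ‖z‖ ^ 2) := by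
  set u := s * x / (a * z)
  have hr : 0 < √‖a * c‖ := Real.sqrt_pos.mpr (norm_pos_iff.mpr (mul_ne_zero ha hc))
  have hr2 : √‖a * c‖ ^ 2 = ‖a‖ * ‖c‖ := by rw [Real.sq_sqrt (norm_nonneg _), norm_mul]
  have hprod : ‖θ - u‖ * ‖θ‖ ≤ ‖s‖ ^ 2 * ‖c - a‖ / (‖a‖ ^ 2 * ‖c‖ * ‖z‖ ^ 2) :=
    calc ‖θ - u‖ * ‖θ‖ ≤ ‖θ - u‖ * ‖-θ - u‖ :=
          mul_le_mul_of_nonneg_left (norm_le_norm_neg_sub_of_norm_sub_le hsign) (norm_nonneg _)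
      _ = ‖s‖ ^ 2 * ‖c - a‖ / (‖a‖ ^ 2 * ‖c‖ * ‖z‖ ^ 2) := by
          rw [← norm_mul, sub_mul_neg_sub_eq_of_pell ha hc hz hθ hpell]
          simp only [norm_div, norm_neg, norm_mul, norm_pow]
  rw [norm_eq_div_sqrt_of_sq_eq hθ, ← le_div_iff₀ (by positivity)] at hprod
  refine hprod.trans_eq ?_
  generalize √‖a * c‖ = r at hr hr2 ⊢
  field_simp
  rw [hr2]
  ring

theorem pell_approximation (hs : s ^ 2 = a * c - 1) (hca : 4 * ‖a‖ < ‖c‖) (ha2 : 2 ≤ ‖a‖)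
    (hz : z ≠ 0) (hpell : a * z ^ 2 - c * x ^ 2 = c - a) (hθ : θ ^ 2 = s ^ 2 / (a * c))
    (hsign : ‖θ - s * x / (a * z)‖ ≤ ‖-θ - s * x / (a * z)‖) :
    ‖θ - s * x / (a * z)‖ ≤ ‖s‖ * ‖c - a‖ / (‖a‖ * √‖a * c‖ * ‖z‖ ^ 2) ∧
      ‖s‖ * ‖c - a‖ / (‖a‖ * √‖a * c‖ * ‖z‖ ^ 2) < 21 * ‖c‖ / (16 * ‖a‖ * ‖z‖ ^ 2) := by
  have ha : a ≠ 0 := norm_pos_iff.mp (by linarith)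
  have hc : c ≠ 0 := norm_pos_iff.mp (by linarith)
  have hs0 : s ≠ 0 := by
    rintro rfl
    have hac := congrArg norm (show a * c = 1 by linear_combination -hs)
    rw [norm_mul, norm_one] at hac
    nlinarith
  refine ⟨norm_sub_le_of_pell ha hc hs0 hz hθ hpell hsign, ?_⟩
  have hs2 := sq_norm_le_of_sq_eq_sub_one hs
  rw [norm_mul] at hs2 ⊢
  exact pell_error_bound_lt ha2 hca hs2 (norm_nonneg _) (norm_sub_le c a) (norm_pos_iff.mpr hz)

end Pell

theorem stmt_7_general (K : Subfield ℂ)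
    (a c s x z : K)
    (hz0 : z ≠ 0)
    (hs : s ^ 2 = a * c - 1)
    (hca : ‖(c : ℂ)‖ > 4 * ‖(a : ℂ)‖) (ha2 : 2 ≤ ‖(a : ℂ)‖)
    (hpell : a * z ^ 2 - c * x ^ 2 = c - a)
    (w : ℂ) (hw : w ^ 2 = (a : ℂ) / (c : ℂ))
    (θ : ℂ) (hθ : θ = ((s : ℂ) / (a : ℂ)) * w ∨ θ = -(((s : ℂ) / (a : ℂ)) * w))
    (hsign : ‖θ - (s : ℂ) * (x : ℂ) / ((a : ℂ) * (z : ℂ))‖ ≤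
      ‖-θ - (s : ℂ) * (x : ℂ) / ((a : ℂ) * (z : ℂ))‖) :
    ‖θ - (s : ℂ) * (x : ℂ) / ((a : ℂ) * (z : ℂ))‖ ≤
      ‖(s : ℂ)‖ * ‖(c : ℂ) - (a : ℂ)‖ /
        (‖(a : ℂ)‖ * Real.sqrt (‖(a : ℂ) * (c : ℂ)‖) * ‖(z : ℂ)‖ ^ 2) ∧
    ‖(s : ℂ)‖ * ‖(c : ℂ) - (a : ℂ)‖ /
        (‖(a : ℂ)‖ * Real.sqrt (‖(a : ℂ) * (c : ℂ)‖) * ‖(z : ℂ)‖ ^ 2) <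
      21 * ‖(c : ℂ)‖ / (16 * ‖(a : ℂ)‖ * ‖(z : ℂ)‖ ^ 2) := by
  have hz : (z : ℂ) ≠ 0 := by exact_mod_cast hz0
  have hsC : (s : ℂ) ^ 2 = a * c - 1 := by exact_mod_cast congrArg ((↑) : K → ℂ) hs
  have hpellC : (a : ℂ) * z ^ 2 - c * x ^ 2 = c - a := by
    exact_mod_cast congrArg ((↑) : K → ℂ) hpell
  have hθ2 := sq_eq_of_eq_or_eq_neg_div_mul (norm_pos_iff.mp (by linarith)) hw hθ
  exact pell_approximation hsC hca ha2 hz hpellC hθ2 hsign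

/-- With s² = ac - 1, |c| > 4|a|, |a| ≥ 2, az² - cx² = c - a and z ≠ 0, if
θ = ±(s/a)√(a/c) with sign chosen so that |θ - sx/(az)| ≤ |-θ - sx/(az)|, then
|θ - sx/(az)| ≤ |s||c-a|/(|a|√|ac| |z|²) < 21|c|/(16|a||z|²). -/
theorem stmt_7 (K : Subfield ℂ)
    (hdeg : Module.finrank ℚ K = 2) (him : ∃ z : K, (z : ℂ).im ≠ 0)
    (a b c s x z : K)
    (haint : IsIntegral ℤ a) (hbint : IsIntegral ℤ b) (hcint : IsIntegral ℤ c)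
    (hsint : IsIntegral ℤ s) (hxint : IsIntegral ℤ x) (hzint : IsIntegral ℤ z)
    (ha0 : a ≠ 0) (hb0 : b ≠ 0) (hc0 : c ≠ 0) (hz0 : z ≠ 0)
    (hs : s ^ 2 = a * c - 1)
    (hca : ‖(c : ℂ)‖ > 4 * ‖(a : ℂ)‖) (ha2 : 2 ≤ ‖(a : ℂ)‖)
    (hpell : a * z ^ 2 - c * x ^ 2 = c - a)
    (w : ℂ) (hw : w ^ 2 = (a : ℂ) / (c : ℂ))
    (θ : ℂ) (hθ : θ = ((s : ℂ) / (a : ℂ)) * w ∨ θ = -(((s : ℂ) / (a : ℂ)) * w))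
    (hsign : ‖θ - (s : ℂ) * (x : ℂ) / ((a : ℂ) * (z : ℂ))‖ ≤
      ‖-θ - (s : ℂ) * (x : ℂ) / ((a : ℂ) * (z : ℂ))‖) :
    ‖θ - (s : ℂ) * (x : ℂ) / ((a : ℂ) * (z : ℂ))‖ ≤
      ‖(s : ℂ)‖ * ‖(c : ℂ) - (a : ℂ)‖ /
        (‖(a : ℂ)‖ * Real.sqrt (‖(a : ℂ) * (c : ℂ)‖) * ‖(z : ℂ)‖ ^ 2) ∧
    ‖(s : ℂ)‖ * ‖(c : ℂ) - (a : ℂ)‖ /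
        (‖(a : ℂ)‖ * Real.sqrt (‖(a : ℂ) * (c : ℂ)‖) * ‖(z : ℂ)‖ ^ 2) <
      21 * ‖(c : ℂ)‖ / (16 * ‖(a : ℂ)‖ * ‖(z : ℂ)‖ ^ 2) :=
  stmt_7_general K a c s x z hz0 hs hca ha2 hpell w hw θ hθ hsign
end

section
/- Let a, b ∈ ℂ be nonzero with 2 ≤ |a|, |b| ≥ (3/2)|a|, and |b| ≥ 22, and let c ∈ ℂ with |c| > |b|¹⁶. Then 27·(|ac| - 1)² > 16·|a|²·|b - a|², i.e., the quantity L = 27(|ac|-1)²/(16|a|²|b-a|²) satisfies L > 1. -/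
/-!
Since `‖b‖ ≥ ‖a‖ ≥ 2`, the triangle inequality gives `‖a‖ ‖b - a‖ ≤ 2 ‖a‖ ‖b‖`, which is far below
`‖a‖ ‖b‖³ - 1 ≤ ‖a c‖ - 1`. Squaring `‖a‖ ‖b - a‖ < ‖a c‖ - 1` and using `16 ≤ 27` finishes.
-/

lemma mul_add_lt_mul_sub_one {A B C : ℝ} (hA : 2 ≤ A) (hAB : A ≤ B) (hC : B ^ 3 ≤ C) :
    A * (B + A) < A * C - 1 := by
  have hAB4 : 4 ≤ A * B := by nlinarith
  have hB2 : 2 ≤ B ^ 2 - 2 := by nlinarith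
  calc A * (B + A) ≤ 2 * (A * B) := by nlinarith
    _ < A * B * (B ^ 2 - 2) + 2 * (A * B) - 1 := by nlinarith
    _ = A * B ^ 3 - 1 := by ring
    _ ≤ A * C - 1 := by gcongr

lemma norm_mul_norm_sub_lt_norm_mul_sub_one {𝕜 : Type*} [NormedDivisionRing 𝕜] {a b c : 𝕜}
    (ha : 2 ≤ ‖a‖) (hab : ‖a‖ ≤ ‖b‖) (hc : ‖b‖ ^ 3 ≤ ‖c‖) :
    ‖a‖ * ‖b - a‖ < ‖a * c‖ - 1 := by
  calc ‖a‖ * ‖b - a‖ ≤ ‖a‖ * (‖b‖ + ‖a‖) := by gcongr; exact norm_sub_le b a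
    _ < ‖a‖ * ‖c‖ - 1 := mul_add_lt_mul_sub_one ha hab hc
    _ = ‖a * c‖ - 1 := by rw [norm_mul]

theorem stmt_8_general (a b c : ℂ)
    (ha : 2 ≤ ‖a‖) (hba : ‖b‖ ≥ (3 / 2) * ‖a‖)
    (hc : ‖c‖ > ‖b‖ ^ (16 : ℕ)) :
    27 * (‖a * c‖ - 1) ^ 2 > 16 * ‖a‖ ^ 2 * ‖b - a‖ ^ 2 := by
  have hab : ‖a‖ ≤ ‖b‖ := by linarith
  have hc3 : ‖b‖ ^ 3 ≤ ‖c‖ :=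
    (pow_le_pow_right₀ (by linarith) (by norm_num)).trans hc.le
  have key := norm_mul_norm_sub_lt_norm_mul_sub_one ha hab hc3
  have hsq : (‖a‖ * ‖b - a‖) ^ 2 < (‖a * c‖ - 1) ^ 2 :=
    pow_lt_pow_left₀ key (by positivity) two_ne_zero
  nlinarith [sq_nonneg (‖a‖ * ‖b - a‖)]

/-- If a, b, c ∈ ℂ are nonzero with 2 ≤ |a|, |b| ≥ (3/2)|a|, |b| ≥ 22 and |c| > |b|¹⁶,
then 27(|ac| - 1)² > 16|a|²|b-a|², i.e. L > 1. -/
theorem stmt_8 (a b c : ℂ) (ha0 : a ≠ 0) (hb0 : b ≠ 0) (hc0 : c ≠ 0)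
    (ha : 2 ≤ ‖a‖) (hba : ‖b‖ ≥ (3 / 2) * ‖a‖)
    (hb : ‖b‖ ≥ 22) (hc : ‖c‖ > ‖b‖ ^ (16 : ℕ)) :
    27 * (‖a * c‖ - 1) ^ 2 > 16 * ‖a‖ ^ 2 * ‖b - a‖ ^ 2 :=
  stmt_8_general a b c ha hba hc
end

section
/- Let K be an imaginary quadratic field ℚ(√-D) with D squarefree positive and O_K its ring of integers. If {a,b,c,d} is a Diophantine quadruple with D(-1) in O_K and 5 < |a| ≤ |b| ≤ |c| ≤ |d|, then not both {a,b,c} and {a,b,d} are regular, where a triple {a,b,c} with r² = ab - 1 is regular if c = a + b + 2r or c = a + b - 2r. -/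
lemma normSq_ge_one (K : Subfield ℂ)
    (hdeg : Module.finrank ℚ K = 2) (him : ∃ z : K, (z : ℂ).im ≠ 0)
    (x : K) (hxint : IsIntegral ℤ x) (hx0 : x ≠ 0) :
    1 ≤ Complex.normSq (x : ℂ) := by
  obtain ⟨z, hz⟩ := him
  have hind : LinearIndependent ℚ ![(1 : K), z] := by
    rw [LinearIndependent.pair_iff]
    intro s t hst
    have h1 : (s : ℂ) + (t : ℂ) * (z : ℂ) = 0 := by
      have := congrArg (fun w : K => (w : ℂ)) hst
      simp only [Rat.smul_def] at this
      push_cast at this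
      simpa using this
    have him0 : (t : ℝ) * (z : ℂ).im = 0 := by
      have := congrArg Complex.im h1
      simpa using this
    have ht : t = 0 := by
      rcases mul_eq_zero.mp him0 with h | h
      · exact_mod_cast h
      · exact absurd h hz
    subst ht
    simp at h1
    exact ⟨by exact_mod_cast h1, rfl⟩
  have hspan : Submodule.span ℚ (Set.range ![(1 : K), z]) = ⊤ :=
    hind.span_eq_top_of_card_eq_finrank (by simp [hdeg])
  have hrange : Set.range ![(1 : K), z] = {1, z} := by
    ext w; simp [Matrix.range_cons, Matrix.range_empty]; tauto
  have hrep : ∀ w : K, ∃ p q : ℚ, (w : ℂ) = p + q * z := by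
    intro w
    have hw : w ∈ Submodule.span ℚ ({(1 : K), z} : Set K) := by
      rw [← hrange, hspan]; trivial
    rw [Submodule.mem_span_pair] at hw
    obtain ⟨p, q, hpq⟩ := hw
    refine ⟨p, q, ?_⟩
    have := congrArg (fun w : K => (w : ℂ)) hpq.symm
    simp only [Rat.smul_def] at this
    push_cast at this
    simpa using this
  -- z satisfies a rational quadratic: z^2 = u + v z
  obtain ⟨u, v, huv⟩ := hrep (z * z)
  have hzz : (z : ℂ) * z = u + v * z := by push_cast at huv ⊢; exact huv
  have hv : (v : ℝ) = 2 * (z : ℂ).re := by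
    have h0 := congrArg Complex.im hzz
    simp [Complex.mul_im, Complex.add_im, Complex.mul_re] at h0
    have h2 : (v : ℝ) * (z:ℂ).im = (2 * (z:ℂ).re) * (z:ℂ).im := by
      linear_combination (-1 : ℝ) * h0
    exact mul_right_cancel₀ hz h2
  have hu : (u : ℝ) = -(Complex.normSq (z : ℂ)) := by
    have h0 := congrArg Complex.re hzz
    simp [Complex.mul_re, Complex.add_re] at h0
    rw [hv] at h0
    simp [Complex.normSq_apply]
    linarith [h0]
  -- representation of x
  obtain ⟨p, q, hpq⟩ := hrep x
  -- normSq x is the rational number p^2 + p q v - q^2 u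
  set m : ℚ := p^2 + p*q*v - q^2*u with hm
  have hmx : Complex.normSq (x : ℂ) = (m : ℝ) := by
    rw [hpq]
    simp [Complex.normSq_apply, Complex.add_re, Complex.add_im, Complex.mul_re,
      Complex.mul_im, hm]
    ring_nf
    rw [hu, hv]
    simp [Complex.normSq_apply]
    ring
  have hcast : ∀ r : ℚ, ((algebraMap ℚ K r : K) : ℂ) = (r : ℂ) := fun r => by
    rw [eq_ratCast (algebraMap ℚ K) r]; exact map_ratCast K.subtype r
  -- the conjugate element
  set y : K := (algebraMap ℚ K (p + q*v)) - (algebraMap ℚ K q) * z with hy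
  have hyc : (y : ℂ) = (starRingEnd ℂ) (x : ℂ) := by
    have hconj : (starRingEnd ℂ) (x : ℂ) = (p : ℂ) + q * (v - z) := by
      rw [hpq]
      rw [map_add, map_mul]
      have hcz : (starRingEnd ℂ) (z : ℂ) = (v : ℂ) - z := by
        apply Complex.ext
        · simp [hv]; ring
        · simp [hv]
      rw [hcz]
      simp
    rw [hconj, hy]
    push_cast [hcast]
    ring
  have hyint : IsIntegral ℤ y := by
    have hxc : IsIntegral ℤ ((x : ℂ)) := hxint.map (K.subtype.toIntAlgHom)
    have hcc : IsIntegral ℤ ((starRingEnd ℂ) (x : ℂ)) :=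
      hxc.map ((starRingEnd ℂ).toIntAlgHom)
    rw [← hyc] at hcc
    exact (isIntegral_algHom_iff (K.subtype.toIntAlgHom) Subtype.val_injective).mp hcc
  have hxy : x * y = algebraMap ℚ K m := by
    apply Subtype.val_injective
    show ((x * y : K) : ℂ) = ((algebraMap ℚ K m : K) : ℂ)
    push_cast [hcast]
    rw [hyc, Complex.mul_conj, hmx]
    norm_cast
  have hmint : IsIntegral ℤ m := by
    have : IsIntegral ℤ (x * y) := hxint.mul hyint
    rw [hxy] at this
    exact (isIntegral_algHom_iff ((algebraMap ℚ K).toIntAlgHom)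
      (algebraMap ℚ K).injective).mp this
  obtain ⟨n, hn⟩ := IsIntegrallyClosed.isIntegral_iff.mp hmint
  have hpos : 0 < Complex.normSq (x : ℂ) := by
    apply Complex.normSq_pos.mpr
    simpa using hx0
  have hn' : ((n : ℚ)) = m := by rw [← hn]; simp
  have hmpos : (0 : ℚ) < m := by rw [hmx] at hpos; exact_mod_cast hpos
  have hnpos : 0 < n := by exact_mod_cast hn' ▸ hmpos
  have hm1 : (1 : ℚ) ≤ m := by rw [← hn']; exact_mod_cast hnpos
  rw [hmx]
  exact_mod_cast hm1


set_option maxHeartbeats 1000000 in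

/-- If {a,b,c,d} is a Diophantine quadruple with D(-1) in O_K and
5 < |a| ≤ |b| ≤ |c| ≤ |d|, then not both {a,b,c} and {a,b,d} are regular,
where {a,b,e} with r² = ab - 1 is regular if e = a + b ± 2r. -/
theorem stmt_12 (K : Subfield ℂ)
    (hdeg : Module.finrank ℚ K = 2) (him : ∃ z : K, (z : ℂ).im ≠ 0)
    (a b c d : K)
    (haint : IsIntegral ℤ a) (hbint : IsIntegral ℤ b)
    (hcint : IsIntegral ℤ c) (hdint : IsIntegral ℤ d)
    (ha0 : a ≠ 0) (hb0 : b ≠ 0) (hc0 : c ≠ 0) (hd0 : d ≠ 0)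
    (hab : a ≠ b) (hac : a ≠ c) (had : a ≠ d)
    (hbc : b ≠ c) (hbd : b ≠ d) (hcd : c ≠ d)
    (hsq : ∀ u v : K, u ∈ ({a, b, c, d} : Set K) → v ∈ ({a, b, c, d} : Set K) →
      u ≠ v → ∃ x : K, IsIntegral ℤ x ∧ u * v - 1 = x ^ 2)
    (h5 : 5 < ‖(a : ℂ)‖)
    (hab' : ‖(a : ℂ)‖ ≤ ‖(b : ℂ)‖)
    (hbc' : ‖(b : ℂ)‖ ≤ ‖(c : ℂ)‖)
    (hcd' : ‖(c : ℂ)‖ ≤ ‖(d : ℂ)‖) :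
    ¬((∃ r : K, IsIntegral ℤ r ∧ r ^ 2 = a * b - 1 ∧
        (c = a + b + 2 * r ∨ c = a + b - 2 * r)) ∧
      (∃ r : K, IsIntegral ℤ r ∧ r ^ 2 = a * b - 1 ∧
        (d = a + b + 2 * r ∨ d = a + b - 2 * r))) := by
  rintro ⟨⟨r, hrint, hr2, hcr⟩, ⟨s, hsint, hs2, hds⟩⟩
  have hss : s = r ∨ s = -r := by
    have h0 : (s - r) * (s + r) = 0 := by linear_combination hs2 - hr2
    rcases mul_eq_zero.mp h0 with h | h
    · exact Or.inl (sub_eq_zero.mp h)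
    · exact Or.inr (eq_neg_of_add_eq_zero_left h)
  have hprod : c * d = (a - b)^2 + 4 := by
    rcases hss with rfl | rfl <;> rcases hcr with hc | hc <;> rcases hds with hd | hd <;>
      first
        | (rw [hc, hd]; linear_combination (-4 : K) * hr2)
        | (exfalso; apply hcd; rw [hc, hd]; ring)
        | (exfalso; apply hcd; rw [hc, hd])
  obtain ⟨x, hxint, hx2⟩ := hsq c d (by simp) (by simp) hcd
  have h3 : (x - (a - b)) * (x + (a - b)) = 3 := by
    linear_combination hprod - hx2
  set u := x - (a - b) with hu
  set v := x + (a - b) with hv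
  have hu0 : u ≠ 0 := by
    intro h; rw [h, zero_mul] at h3; exact three_ne_zero h3.symm
  have hv0 : v ≠ 0 := by
    intro h; rw [h, mul_zero] at h3; exact three_ne_zero h3.symm
  have huint : IsIntegral ℤ u := hxint.sub (haint.sub hbint)
  have hvint : IsIntegral ℤ v := hxint.add (haint.sub hbint)
  have h9 : Complex.normSq (u : ℂ) * Complex.normSq (v : ℂ) = 9 := by
    rw [← map_mul]
    have : ((u : ℂ)) * v = 3 := by
      have := congrArg (fun w : K => (w : ℂ)) h3
      push_cast at this
      exact this
    rw [this]
    norm_num [Complex.normSq_apply]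
  have hu1 := normSq_ge_one K hdeg him u huint hu0
  have hv1 := normSq_ge_one K hdeg him v hvint hv0
  have hu9 : Complex.normSq (u : ℂ) ≤ 9 := by nlinarith
  have hv9 : Complex.normSq (v : ℂ) ≤ 9 := by nlinarith
  have hua : ‖(u : ℂ)‖ ≤ 3 := by
    have h1 : ‖(u : ℂ)‖ ^ 2 ≤ 9 := by
      rw [Complex.sq_norm]; exact hu9
    nlinarith [norm_nonneg (u : ℂ)]
  have hva : ‖(v : ℂ)‖ ≤ 3 := by
    have h1 : ‖(v : ℂ)‖ ^ 2 ≤ 9 := by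
      rw [Complex.sq_norm]; exact hv9
    nlinarith [norm_nonneg (v : ℂ)]
  have hxa : ‖(x : ℂ)‖ ≤ 3 := by
    have hsum : (u : ℂ) + v = 2 * x := by
      have h := congrArg (fun w : K => (w : ℂ)) (show u + v = 2 * x by rw [hu, hv]; ring)
      push_cast at h
      exact h
    have h1 : ‖((u : ℂ) + v)‖ ≤ 6 := by
      calc ‖((u : ℂ) + v)‖ ≤ ‖(u : ℂ)‖ + ‖(v : ℂ)‖ :=
            norm_add_le _ _
        _ ≤ 6 := by linarith
    rw [hsum] at h1
    rw [norm_mul] at h1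
    simp at h1
    linarith
  have hcdx : ((c : ℂ)) * d = (x : ℂ) ^ 2 + 1 := by
    have : c * d = x ^ 2 + 1 := by linear_combination hx2
    exact_mod_cast congrArg (fun w : K => (w : ℂ)) this
  have h10 : ‖((c : ℂ) * d)‖ ≤ 10 := by
    rw [hcdx]
    calc ‖((x : ℂ) ^ 2 + 1)‖ ≤ ‖((x : ℂ) ^ 2)‖ + ‖(1 : ℂ)‖ :=
          norm_add_le _ _
      _ ≤ 10 := by
          rw [norm_pow, norm_one]
          nlinarith [norm_nonneg (x : ℂ)]
  rw [norm_mul] at h10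
  have hca : 5 < ‖(c : ℂ)‖ := by linarith
  have hda : 5 < ‖(d : ℂ)‖ := by linarith
  nlinarith
end

section
/- Let {a, b, c, d} be a Diophantine quadruple with D(-1) in the ring of integers O_K of an imaginary quadratic field, with 10 ≤ |a| ≤ |b| ≤ |c| ≤ |d|, and suppose {a, b, d} is not regular. Define c± = a + b + d - 2abd ± 2rxy where r² = ab - 1, x² = ad - 1, y² = bd - 1. Then c₊·c₋ = a² + b² + d² - 2ab - 2ad - 2bd + 4 and both c₊ and c₋ are nonzero. -/
/-! Expanding, `c₊ c₋ = (a + b + d - 2abd)² - 4r²x²y²`, which after substituting the squares is the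
quadratic `d² - 2d(a + b) + (a - b)² + 4 = (d - (a + b + 2r))(d - (a + b - 2r))`. Non-regularity
of `{a, b, d}` makes both factors nonzero, so neither `c₊` nor `c₋` can vanish. -/

section CommRing

variable {R : Type*} [CommRing R] {a b d r x y : R}

theorem extensions_mul_eq (hr : r ^ 2 = a * b - 1) (hx : x ^ 2 = a * d - 1)
    (hy : y ^ 2 = b * d - 1) :
    (a + b + d - 2 * a * b * d + 2 * r * x * y) * (a + b + d - 2 * a * b * d - 2 * r * x * y) =
      a ^ 2 + b ^ 2 + d ^ 2 - 2 * a * b - 2 * a * d - 2 * b * d + 4 := by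
  linear_combination (-4 * x ^ 2 * y ^ 2) * hr - 4 * (a * b - 1) * y ^ 2 * hx
    - 4 * (a * b - 1) * (a * d - 1) * hy

theorem regularity_quadratic_eq_mul (hr : r ^ 2 = a * b - 1) :
    a ^ 2 + b ^ 2 + d ^ 2 - 2 * a * b - 2 * a * d - 2 * b * d + 4 =
      (d - (a + b + 2 * r)) * (d - (a + b - 2 * r)) := by
  linear_combination 4 * hr

theorem regularity_quadratic_ne_zero [NoZeroDivisors R] (hr : r ^ 2 = a * b - 1)
    (hnreg : d ≠ a + b + 2 * r ∧ d ≠ a + b - 2 * r) :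
    a ^ 2 + b ^ 2 + d ^ 2 - 2 * a * b - 2 * a * d - 2 * b * d + 4 ≠ 0 := by
  rw [regularity_quadratic_eq_mul hr]
  exact mul_ne_zero (sub_ne_zero.mpr hnreg.1) (sub_ne_zero.mpr hnreg.2)

end CommRing

theorem stmt_16_general (K : Subfield ℂ)
    (a b d r x y : K)
    (hr : r ^ 2 = a * b - 1) (hx : x ^ 2 = a * d - 1) (hy : y ^ 2 = b * d - 1)
    (hnreg : d ≠ a + b + 2 * r ∧ d ≠ a + b - 2 * r) :
    (a + b + d - 2 * a * b * d + 2 * r * x * y) *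
        (a + b + d - 2 * a * b * d - 2 * r * x * y) =
      a ^ 2 + b ^ 2 + d ^ 2 - 2 * a * b - 2 * a * d - 2 * b * d + 4 ∧
    a + b + d - 2 * a * b * d + 2 * r * x * y ≠ 0 ∧
    a + b + d - 2 * a * b * d - 2 * r * x * y ≠ 0 := by
  have hprod := extensions_mul_eq hr hx hy
  have hne := hprod.symm ▸ regularity_quadratic_ne_zero hr hnreg
  exact ⟨hprod, left_ne_zero_of_mul hne, right_ne_zero_of_mul hne⟩

/-- For a Diophantine quadruple {a,b,c,d} with D(-1), 10 ≤ |a| ≤ |b| ≤ |c| ≤ |d|,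
with {a,b,d} not regular, and r² = ab-1, x² = ad-1, y² = bd-1, the elements
c± = a + b + d - 2abd ± 2rxy satisfy
c₊c₋ = a² + b² + d² - 2ab - 2ad - 2bd + 4 and c₊ ≠ 0 ≠ c₋. -/
theorem stmt_16 (K : Subfield ℂ)
    (hdeg : Module.finrank ℚ K = 2) (him : ∃ z : K, (z : ℂ).im ≠ 0)
    (a b c d r x y : K)
    (haint : IsIntegral ℤ a) (hbint : IsIntegral ℤ b)
    (hcint : IsIntegral ℤ c) (hdint : IsIntegral ℤ d)
    (hrint : IsIntegral ℤ r) (hxint : IsIntegral ℤ x) (hyint : IsIntegral ℤ y)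
    (ha0 : a ≠ 0) (hb0 : b ≠ 0) (hc0 : c ≠ 0) (hd0 : d ≠ 0)
    (hab : a ≠ b) (hac : a ≠ c) (had : a ≠ d)
    (hbc : b ≠ c) (hbd : b ≠ d) (hcd : c ≠ d)
    (hsq : ∀ u v : K, u ∈ ({a, b, c, d} : Set K) → v ∈ ({a, b, c, d} : Set K) →
      u ≠ v → ∃ w : K, IsIntegral ℤ w ∧ u * v - 1 = w ^ 2)
    (h10 : 10 ≤ ‖(a : ℂ)‖)
    (hab' : ‖(a : ℂ)‖ ≤ ‖(b : ℂ)‖)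
    (hbc' : ‖(b : ℂ)‖ ≤ ‖(c : ℂ)‖)
    (hcd' : ‖(c : ℂ)‖ ≤ ‖(d : ℂ)‖)
    (hr : r ^ 2 = a * b - 1) (hx : x ^ 2 = a * d - 1) (hy : y ^ 2 = b * d - 1)
    (hnreg : d ≠ a + b + 2 * r ∧ d ≠ a + b - 2 * r) :
    (a + b + d - 2 * a * b * d + 2 * r * x * y) *
        (a + b + d - 2 * a * b * d - 2 * r * x * y) =
      a ^ 2 + b ^ 2 + d ^ 2 - 2 * a * b - 2 * a * d - 2 * b * d + 4 ∧
    a + b + d - 2 * a * b * d + 2 * r * x * y ≠ 0 ∧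
    a + b + d - 2 * a * b * d - 2 * r * x * y ≠ 0 :=
  stmt_16_general K a b d r x y hr hx hy hnreg
end
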